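/- arXiv:1503.02495 — 4 statements merged into one kernel-verified Lean document; each statement's English description precedes it below -/
import Mathlib

section
/- For all n ∈ ℕ with n ≥ 2 and all d ∈ ℕ, it holds that H(P(d+1)_{n−1}) − H(P(d)_n) ≤ (ln 2)(n−1)·μ(V_{d+1}). -/
/-!
Refine `P(d)_n` by the `n - 1` two-cell partitions `{T^[k] ω < T^[k + d + 1] ω}`, `k < n - 1`.
The refinement is finer than `P(d+1)_{n-1}`, since the order-`d` windows at `k` and `k + 1`
fix every comparison in the order-`(d+1)` window at `k` except that of its two ends. Splitting
a cell in two raises the entropy by at most `log 2` times its mass, and the `k`-th split only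
cuts cells of `P(d)_n` contained in `T^[-k] V_{d+1}`: outside `V_{d+1}` an intermediate iterate
lies between the two ends, and the order-`d` windows see on which side of it each end lies.
Invariance gives `μ (T^[-k] V_{d+1}) = μ V_{d+1}`.
-/

open MeasureTheory Set Filter
open scoped ENNReal

noncomputable section

/-- The vector `(x 0, …, x d)` has ordinal pattern `π = (π 0, …, π d)`. -/
def HasOrdinalPattern {d : ℕ} (x : Fin (d + 1) → ℝ) (π : Equiv.Perm (Fin (d + 1))) : Prop :=
  ∀ l : Fin d, x (π l.succ) < x (π l.castSucc) ∨
    (x (π l.castSucc) = x (π l.succ) ∧ π l.succ < π l.castSucc)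

/-- The element `P_π` of the ordinal partition `P(d)` of order `d`:
points `ω ∈ Ω` such that `(T^[d] ω, T^[d-1] ω, …, T ω, ω)` has ordinal pattern `π`. -/
def ordCell (Ω : Set ℝ) (T : ℝ → ℝ) (d : ℕ) (π : Equiv.Perm (Fin (d + 1))) : Set ℝ :=
  {ω ∈ Ω | HasOrdinalPattern (fun i => T^[d - (i : ℕ)] ω) π}

/-- The element `P_{π₁…π_n}` of the partition `P(d)_n` corresponding to the `(n,d)`-word `w`. -/
def wordCell (Ω : Set ℝ) (T : ℝ → ℝ) (d n : ℕ)
    (w : Fin n → Equiv.Perm (Fin (d + 1))) : Set ℝ :=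
  {ω | ∀ i : Fin n, T^[(i : ℕ)] ω ∈ ordCell Ω T d (w i)}

/-- The set `V_d`. -/
def Vset (Ω : Set ℝ) (T : ℝ → ℝ) (d : ℕ) : Set ℝ :=
  {ω ∈ Ω |
    (ω < T^[d] ω ∧ ∀ l : ℕ, 1 ≤ l → l ≤ d - 1 → T^[l] ω ∉ Set.Ioo ω (T^[d] ω)) ∨
    (T^[d] ω ≤ ω ∧ ∀ l : ℕ, 1 ≤ l → l ≤ d - 1 → T^[l] ω ∉ Set.Icc (T^[d] ω) ω)}

/-- The entropy `H(P(d))` of the ordinal partition of order `d`. -/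
def ordEntropy (μ : Measure ℝ) (Ω : Set ℝ) (T : ℝ → ℝ) (d : ℕ) : ℝ :=
  ∑ π : Equiv.Perm (Fin (d + 1)), Real.negMulLog (μ (ordCell Ω T d π)).toReal

/-- The entropy `H(P(d)_n)` of the partition into `(n,d)`-word cells. -/
def wordEntropy (μ : Measure ℝ) (Ω : Set ℝ) (T : ℝ → ℝ) (d n : ℕ) : ℝ :=
  ∑ w : Fin n → Equiv.Perm (Fin (d + 1)), Real.negMulLog (μ (wordCell Ω T d n w)).toReal

/-- `T` is (strong-)mixing with respect to `μ`. -/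
def Mixing (μ : Measure ℝ) (T : ℝ → ℝ) : Prop :=
  ∀ A B : Set ℝ, MeasurableSet A → MeasurableSet B →
    Tendsto (fun n => μ (T^[n] ⁻¹' A ∩ B)) atTop (nhds (μ A * μ B))

/-- `T` is ergodic with respect to `μ`. -/
def IsErgodicMap (μ : Measure ℝ) (T : ℝ → ℝ) : Prop :=
  ∀ B : Set ℝ, MeasurableSet B → T ⁻¹' B = B → μ B = 0 ∨ μ B = 1

/-- The set `Ṽ_d(A)`. -/
def Vtilde (A : Set ℝ) (T : ℝ → ℝ) (d : ℕ) : Set ℝ :=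
  {ω ∈ A |
    (∀ l : ℕ, 1 ≤ l → l ≤ d - 1 → T^[l] ω ∉ {a ∈ A | a < ω}) ∨
    (∀ l : ℕ, 1 ≤ l → l ≤ d - 1 → T^[l] ω ∉ {a ∈ A | ω < a})}

section OrdinalPattern

variable {d : ℕ} {x y : Fin (d + 1) → ℝ} {π π' : Equiv.Perm (Fin (d + 1))}

/-- An ordinal pattern lists the indices in increasing order of this key: decreasing value,
ties broken by decreasing index. -/
def ordKey (x : Fin (d + 1) → ℝ) (i : Fin (d + 1)) : ℝ ×ₗ (Fin (d + 1))ᵒᵈ :=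
  toLex (-x i, OrderDual.toDual i)

lemma ordKey_injective (x : Fin (d + 1) → ℝ) : Function.Injective (ordKey x) :=
  fun a b h => by simpa [ordKey] using congrArg (fun p => (ofLex p).2) h

lemma ordKey_lt_ordKey_iff {a b : Fin (d + 1)} :
    ordKey x a < ordKey x b ↔ x b < x a ∨ (x a = x b ∧ b < a) := by
  simp [ordKey, Prod.Lex.toLex_lt_toLex]

lemma ordKey_lt_ordKey_iff_of_lt {a b : Fin (d + 1)} (hab : a < b) :
    ordKey x a < ordKey x b ↔ x b < x a := by
  simp [ordKey_lt_ordKey_iff, hab.not_gt]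

lemma hasOrdinalPattern_iff_strictMono : HasOrdinalPattern x π ↔ StrictMono (ordKey x ∘ π) := by
  rw [Fin.strictMono_iff_lt_succ]
  exact forall_congr' fun l => ordKey_lt_ordKey_iff.symm

lemma exists_hasOrdinalPattern (x : Fin (d + 1) → ℝ) : ∃ π, HasOrdinalPattern x π :=
  ⟨Tuple.sort (ordKey x), hasOrdinalPattern_iff_strictMono.2 <|
    (Tuple.monotone_sort _).strictMono_of_injective ((ordKey_injective x).comp (Equiv.injective _))⟩

namespace HasOrdinalPattern

lemma unique (h : HasOrdinalPattern x π) (h' : HasOrdinalPattern x π') : π = π' := by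
  rw [hasOrdinalPattern_iff_strictMono] at h h'
  have hrange : Set.range (ordKey x ∘ π) = Set.range (ordKey x ∘ π') := by
    simp only [Set.range_comp, Equiv.range_eq_univ]
  exact Equiv.ext fun i => ordKey_injective x (congrFun ((h.range_inj h').1 hrange) i)

lemma ordKey_lt_ordKey_iff (h : HasOrdinalPattern x π) {a b : Fin (d + 1)} :
    ordKey x a < ordKey x b ↔ π.symm a < π.symm b := by
  conv_lhs => rw [← π.apply_symm_apply a, ← π.apply_symm_apply b]
  exact (hasOrdinalPattern_iff_strictMono.1 h).lt_iff_lt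

lemma hasOrdinalPattern_iff (h : HasOrdinalPattern x π) :
    HasOrdinalPattern y π ↔ ∀ a b, a < b → (x b < x a ↔ y b < y a) := by
  refine ⟨fun h' a b hab => ?_, fun H => ?_⟩
  · rw [← ordKey_lt_ordKey_iff_of_lt hab, ← ordKey_lt_ordKey_iff_of_lt hab,
      h.ordKey_lt_ordKey_iff, h'.ordKey_lt_ordKey_iff]
  have hkey : ∀ a b, ordKey x a < ordKey x b ↔ ordKey y a < ordKey y b := by
    intro a b
    rcases lt_trichotomy a b with hab | rfl | hab
    · rw [ordKey_lt_ordKey_iff_of_lt hab, ordKey_lt_ordKey_iff_of_lt hab, H a b hab]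
    · simp
    · rw [← not_le, ← not_le, le_iff_lt_or_eq, le_iff_lt_or_eq, (ordKey_injective x).eq_iff,
        (ordKey_injective y).eq_iff, ordKey_lt_ordKey_iff_of_lt hab,
        ordKey_lt_ordKey_iff_of_lt hab, H b a hab]
  exact hasOrdinalPattern_iff_strictMono.2 fun p q hpq =>
    (hkey _ _).1 (hasOrdinalPattern_iff_strictMono.1 h hpq)

end HasOrdinalPattern

end OrdinalPattern

section Orbit

open Function

variable {Ω : Set ℝ} {T : ℝ → ℝ} {d n i : ℕ} {ω ω' : ℝ} {π : Equiv.Perm (Fin (d + 1))}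
  {w : Fin n → Equiv.Perm (Fin (d + 1))}

def SameOrderOn (T : ℝ → ℝ) (ω ω' : ℝ) (i j : ℕ) : Prop :=
  ∀ p q, i ≤ p → p < q → q ≤ j → (T^[p] ω < T^[q] ω ↔ T^[p] ω' < T^[q] ω')

lemma SameOrderOn.step (h₁ : SameOrderOn T ω ω' i (i + d))
    (h₂ : SameOrderOn T ω ω' (i + 1) (i + 1 + d))
    (hends : T^[i] ω < T^[i + (d + 1)] ω ↔ T^[i] ω' < T^[i + (d + 1)] ω') :
    SameOrderOn T ω ω' i (i + (d + 1)) := by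
  intro p q hp hpq hq
  by_cases hqd : q ≤ i + d
  · exact h₁ p q hp hpq hqd
  by_cases hpi : i + 1 ≤ p
  · exact h₂ p q hpi hpq (by omega)
  obtain rfl : i = p := by omega
  obtain rfl : i + (d + 1) = q := by omega
  exact hends

lemma forall_fin_lt_iff_forall_lt_le {P : ℕ → ℕ → Prop} :
    (∀ a b : Fin (d + 1), a < b → P (d - b + i) (d - a + i)) ↔
      ∀ p q, i ≤ p → p < q → q ≤ i + d → P p q := by
  refine ⟨fun h p q hp hpq hq => ?_, fun h a b hab => h _ _ (by omega) (by omega) (by omega)⟩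
  have := h ⟨i + d - q, by omega⟩ ⟨i + d - p, by omega⟩ (Fin.mk_lt_mk.2 (by omega))
  rwa [show d - (i + d - q) + i = q by omega, show d - (i + d - p) + i = p by omega] at this

lemma iterate_mem_ordCell_iff (hω : T^[i] ω ∈ ordCell Ω T d π) :
    T^[i] ω' ∈ ordCell Ω T d π ↔ T^[i] ω' ∈ Ω ∧ SameOrderOn T ω ω' i (i + d) := by
  simp only [ordCell, mem_ofPred_eq] at hω ⊢
  rw [hω.2.hasOrdinalPattern_iff]
  simp only [← Function.iterate_add_apply]
  rw [forall_fin_lt_iff_forall_lt_le (P := fun p q => T^[p] ω < T^[q] ω ↔ T^[p] ω' < T^[q] ω')]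
  rfl

lemma iterate_mem_of_mem_wordCell (hω : ω ∈ wordCell Ω T d n w) (hi : i < n) : T^[i] ω ∈ Ω :=
  (hω ⟨i, hi⟩).1

lemma sameOrderOn_of_mem_wordCell (hω : ω ∈ wordCell Ω T d n w)
    (hω' : ω' ∈ wordCell Ω T d n w) (hi : i < n) : SameOrderOn T ω ω' i (i + d) :=
  ((iterate_mem_ordCell_iff (hω ⟨i, hi⟩)).1 (hω' ⟨i, hi⟩)).2

lemma mem_wordCell_of_sameOrderOn (hω : ω ∈ wordCell Ω T d n w)
    (hΩ : ∀ i < n, T^[i] ω' ∈ Ω) (h : ∀ i < n, SameOrderOn T ω ω' i (i + d)) :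
    ω' ∈ wordCell Ω T d n w :=
  fun i => (iterate_mem_ordCell_iff (hω i)).2 ⟨hΩ i i.2, h i i.2⟩

lemma exists_mem_wordCell (h : ∀ i < n, T^[i] ω ∈ Ω) : ∃ w, ω ∈ wordCell Ω T d n w :=
  ⟨fun _ => (exists_hasOrdinalPattern _).choose,
    fun i => ⟨h i i.2, (exists_hasOrdinalPattern _).choose_spec⟩⟩

lemma pairwise_disjoint_wordCell : Pairwise (Disjoint on wordCell Ω T d n) :=
  fun _ _ hne => disjoint_left.2 fun _ h h' => hne (funext fun i => (h i).2.unique (h' i).2)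

lemma measurableSet_ordCell (hΩ : MeasurableSet Ω) (hT : Measurable T) :
    MeasurableSet (ordCell Ω T d π) := by
  have := hT.iterate
  simp only [ordCell, HasOrdinalPattern]
  measurability

lemma measurableSet_wordCell (hΩ : MeasurableSet Ω) (hT : Measurable T) :
    MeasurableSet (wordCell Ω T d n w) :=
  measurableSet_setOfPred.2 <| Measurable.forall fun _ =>
    (measurable_mem.2 (measurableSet_ordCell hΩ hT)).comp (hT.iterate _)

lemma measurableSet_Vset (hΩ : MeasurableSet Ω) (hT : Measurable T) :
    MeasurableSet (Vset Ω T d) := by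
  have := hT.iterate
  simp only [Vset, mem_Ioo, mem_Icc]
  measurability

end Orbit

lemma Real.negMulLog_add_le {x y : ℝ} (hx : 0 ≤ x) (hy : 0 ≤ y) :
    Real.negMulLog (x + y) ≤ Real.negMulLog x + Real.negMulLog y := by
  have hlog : ∀ {a : ℝ}, 0 ≤ a → a ≤ x + y → a * Real.log a ≤ a * Real.log (x + y) := by
    intro a ha hle
    rcases ha.eq_or_lt with rfl | ha
    · simp
    · exact mul_le_mul_of_nonneg_left (Real.log_le_log ha hle) ha.le
  simp only [Real.negMulLog, neg_mul, add_mul]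
  linarith [hlog hx (le_add_of_nonneg_right hy), hlog hy (le_add_of_nonneg_left hx)]

lemma Real.negMulLog_sum_le {ι : Type*} (s : Finset ι) {f : ι → ℝ} (hf : ∀ i ∈ s, 0 ≤ f i) :
    Real.negMulLog (∑ i ∈ s, f i) ≤ ∑ i ∈ s, Real.negMulLog (f i) :=
  Finset.le_sum_of_subadditive_on_pred _ (0 ≤ ·) (by simp)
    (fun _ _ => Real.negMulLog_add_le) (fun _ _ => add_nonneg) f hf

lemma Real.negMulLog_add_negMulLog_le {x y : ℝ} (hx : 0 ≤ x) (hy : 0 ≤ y) :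
    Real.negMulLog x + Real.negMulLog y ≤ Real.negMulLog (x + y) + (x + y) * Real.log 2 := by
  have h := Real.concaveOn_negMulLog.2 (mem_Ici.2 (by positivity : (0 : ℝ) ≤ 2 * x))
    (mem_Ici.2 (by positivity : (0 : ℝ) ≤ 2 * y)) (by norm_num : (0 : ℝ) ≤ 1 / 2)
    (by norm_num : (0 : ℝ) ≤ 1 / 2) (by norm_num)
  simp only [smul_eq_mul, Real.negMulLog_mul] at h
  rw [show 1 / 2 * (2 * x) + 1 / 2 * (2 * y) = x + y by ring] at h
  simp only [Real.negMulLog] at h ⊢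
  linarith

lemma mem_cond_compl_iff {α : Type*} {x : α} {B : Set α} {c : Bool} :
    x ∈ cond c B Bᶜ ↔ (x ∈ B ↔ c) := by
  cases c <;> simp

section PartitionEntropy

open Function

variable {α ι κ : Type*} [MeasurableSpace α] {μ : Measure α} [Fintype ι] [Fintype κ]
  {s : ι → Set α}

def partitionEntropy (μ : Measure α) (s : ι → Set α) : ℝ :=
  ∑ i, Real.negMulLog (μ (s i)).toReal

lemma partitionEntropy_comp_equiv (e : κ ≃ ι) :
    partitionEntropy μ (s ∘ e) = partitionEntropy μ s :=
  e.sum_comp fun i => Real.negMulLog (μ (s i)).toReal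

variable [IsFiniteMeasure μ]

lemma partitionEntropy_le_of_forall_subset {t : κ → Set α} (hs : ∀ i, MeasurableSet (s i))
    (hsd : Pairwise (Disjoint on s)) (htd : Pairwise (Disjoint on t))
    (hst : ∀ i, ∃ k, s i ⊆ t k) (hts : ∀ k, t k ⊆ ⋃ i, s i) :
    partitionEntropy μ t ≤ partitionEntropy μ s := by
  classical
  choose f hf using hst
  have ht : ∀ k, t k = ⋃ i ∈ Finset.univ.filter (f · = k), s i := by
    refine fun k => Subset.antisymm (fun x hx => ?_) (iUnion₂_subset fun i hi => ?_)
    · obtain ⟨i, hi⟩ := mem_iUnion.1 (hts k hx)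
      have hik : f i = k := by
        by_contra hne
        exact disjoint_left.1 (htd hne) (hf i hi) hx
      exact mem_iUnion₂.2 ⟨i, by simpa using hik, hi⟩
    · exact (Finset.mem_filter.1 hi).2 ▸ hf i
  calc partitionEntropy μ t
      = ∑ k, Real.negMulLog (∑ i ∈ Finset.univ.filter (f · = k), (μ (s i)).toReal) := by
        refine Finset.sum_congr rfl fun k _ => ?_
        rw [ht k, measure_biUnion_finset (hsd.set_pairwise _) fun i _ => hs i,
          ENNReal.toReal_sum fun i _ => measure_ne_top μ _]
    _ ≤ ∑ k, ∑ i ∈ Finset.univ.filter (f · = k), Real.negMulLog (μ (s i)).toReal :=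
        Finset.sum_le_sum fun k _ => Real.negMulLog_sum_le _ fun i _ => ENNReal.toReal_nonneg
    _ = partitionEntropy μ s := Finset.sum_fiberwise _ _ _

lemma negMulLog_measure_split_le {S B E : Set α} (hB : MeasurableSet B)
    (h : S ⊆ B ∨ S ⊆ Bᶜ ∨ S ⊆ E) :
    Real.negMulLog (μ (S ∩ B)).toReal + Real.negMulLog (μ (S ∩ Bᶜ)).toReal ≤
      Real.negMulLog (μ S).toReal + Real.log 2 * (μ (S ∩ E)).toReal := by
  have hlog2 : 0 ≤ Real.log 2 * (μ (S ∩ E)).toReal := by positivity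
  rcases h with hSB | hSB | hSE
  · rw [inter_eq_left.2 hSB, disjoint_iff_inter_eq_empty.1 (disjoint_compl_right.mono_left hSB)]
    simpa using hlog2
  · rw [inter_eq_left.2 hSB, disjoint_iff_inter_eq_empty.1 (disjoint_compl_left.mono_left hSB)]
    simpa using hlog2
  · have hsum : (μ (S ∩ B)).toReal + (μ (S ∩ Bᶜ)).toReal = (μ S).toReal := by
      rw [← ENNReal.toReal_add (measure_ne_top _ _) (measure_ne_top _ _), ← sdiff_eq,
        measure_inter_add_sdiff _ hB]
    rw [inter_eq_left.2 hSE, ← hsum, mul_comm]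
    exact Real.negMulLog_add_negMulLog_le ENNReal.toReal_nonneg ENNReal.toReal_nonneg

lemma partitionEntropy_split_le {B E : Set α} (hs : ∀ i, MeasurableSet (s i))
    (hsd : Pairwise (Disjoint on s)) (hB : MeasurableSet B) (hE : MeasurableSet E)
    (h : ∀ i, s i ⊆ B ∨ s i ⊆ Bᶜ ∨ s i ⊆ E) :
    partitionEntropy μ (fun p : ι × Bool => s p.1 ∩ cond p.2 B Bᶜ) ≤
      partitionEntropy μ s + Real.log 2 * (μ E).toReal := by
  have hE' : ∑ i, (μ (s i ∩ E)).toReal ≤ (μ E).toReal := by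
    rw [← ENNReal.toReal_sum fun i _ => measure_ne_top _ _, ← measure_biUnion_finset
      (fun i _ j _ hij => (hsd hij).mono inter_subset_left inter_subset_left)
      fun i _ => (hs i).inter hE]
    exact ENNReal.toReal_mono (measure_ne_top _ _)
      (measure_mono (iUnion₂_subset fun i _ => inter_subset_right))
  calc partitionEntropy μ (fun p : ι × Bool => s p.1 ∩ cond p.2 B Bᶜ)
      = ∑ i, (Real.negMulLog (μ (s i ∩ B)).toReal + Real.negMulLog (μ (s i ∩ Bᶜ)).toReal) := by
        simp [partitionEntropy, Fintype.sum_prod_type]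
    _ ≤ ∑ i, (Real.negMulLog (μ (s i)).toReal + Real.log 2 * (μ (s i ∩ E)).toReal) :=
        Finset.sum_le_sum fun i _ => negMulLog_measure_split_le hB (h i)
    _ ≤ partitionEntropy μ s + Real.log 2 * (μ E).toReal := by
        rw [Finset.sum_add_distrib, ← Finset.mul_sum]
        exact add_le_add_right (mul_le_mul_of_nonneg_left hE' (Real.log_nonneg one_le_two)) _

end PartitionEntropy

section BitRefinement

open Function

variable {α ι : Type*} {m : ℕ} {s : ι → Set α} {B : Fin m → Set α}

def bitRefinement (s : ι → Set α) (B : Fin m → Set α) (p : ι × (Fin m → Bool)) : Set α :=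
  s p.1 ∩ ⋂ k, cond (p.2 k) (B k) (B k)ᶜ

lemma iUnion_bitRefinement : ⋃ p, bitRefinement s B p = ⋃ i, s i := by
  classical
  refine Subset.antisymm (iUnion_subset fun p => inter_subset_left.trans (subset_iUnion _ _))
    (iUnion_subset fun i x hx => mem_iUnion.2 ⟨(i, fun k => decide (x ∈ B k)), hx, ?_⟩)
  exact mem_iInter.2 fun k => mem_cond_compl_iff.2 (by simp)

lemma pairwise_disjoint_bitRefinement (hs : Pairwise (Disjoint on s)) :
    Pairwise (Disjoint on bitRefinement s B) := by
  rintro ⟨i, b⟩ ⟨j, c⟩ hne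
  refine disjoint_left.2 fun x hx hy => hne ?_
  obtain rfl : i = j := by
    by_contra hij
    exact disjoint_left.1 (hs hij) hx.1 hy.1
  refine Prod.ext rfl (funext fun k => Bool.eq_iff_iff.2 ?_)
  exact (mem_cond_compl_iff.1 (mem_iInter.1 hx.2 k)).symm.trans
    (mem_cond_compl_iff.1 (mem_iInter.1 hy.2 k))

lemma measurableSet_bitRefinement [MeasurableSpace α] (hs : ∀ i, MeasurableSet (s i))
    (hB : ∀ k, MeasurableSet (B k)) (p : ι × (Fin m → Bool)) :
    MeasurableSet (bitRefinement s B p) :=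
  (hs p.1).inter <| MeasurableSet.iInter fun k => by
    cases p.2 k
    exacts [(hB k).compl, hB k]

lemma bitRefinement_snoc (s : ι → Set α) (B : Fin (m + 1) → Set α) (p : ι × (Fin m → Bool))
    (c : Bool) :
    bitRefinement s B (p.1, Fin.snoc p.2 c) =
      bitRefinement s (Fin.init B) p ∩ cond c (B (Fin.last m)) (B (Fin.last m))ᶜ := by
  ext x
  simp only [bitRefinement, mem_inter_iff, mem_iInter, Fin.forall_fin_succ', Fin.snoc_castSucc,
    Fin.snoc_last, Fin.init, and_assoc]

theorem partitionEntropy_bitRefinement_le [MeasurableSpace α] {μ : Measure α}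
    [IsFiniteMeasure μ] [Fintype ι] {E : Fin m → Set α} (hs : ∀ i, MeasurableSet (s i))
    (hsd : Pairwise (Disjoint on s)) (hB : ∀ k, MeasurableSet (B k))
    (hE : ∀ k, MeasurableSet (E k)) (h : ∀ k i, s i ⊆ B k ∨ s i ⊆ (B k)ᶜ ∨ s i ⊆ E k) :
    partitionEntropy μ (bitRefinement s B) ≤
      partitionEntropy μ s + Real.log 2 * ∑ k, (μ (E k)).toReal := by
  induction m with
  | zero =>
    have he : bitRefinement s B = s ∘ Equiv.prodUnique ι (Fin 0 → Bool) := by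
      ext p
      simp [bitRefinement]
    rw [he, partitionEntropy_comp_equiv]
    simp
  | succ m ih =>
    let e : (ι × (Fin m → Bool)) × Bool ≃ ι × (Fin (m + 1) → Bool) :=
      (Equiv.prodAssoc _ _ _).trans
        ((Equiv.refl ι).prodCongr ((Equiv.prodComm _ _).trans (Fin.snocEquiv fun _ => Bool)))
    have he : bitRefinement s B ∘ e = fun q => bitRefinement s (Fin.init B) q.1 ∩
        cond q.2 (B (Fin.last m)) (B (Fin.last m))ᶜ :=
      funext fun q => bitRefinement_snoc s B q.1 q.2
    have hsub : ∀ q, bitRefinement s (Fin.init B) q ⊆ s q.1 := fun _ => inter_subset_left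
    rw [← partitionEntropy_comp_equiv e, he, Fin.sum_univ_castSucc, mul_add, ← add_assoc]
    calc _ ≤ partitionEntropy μ (bitRefinement s (Fin.init B)) +
          Real.log 2 * (μ (E (Fin.last m))).toReal :=
          partitionEntropy_split_le (measurableSet_bitRefinement hs fun _ => hB _)
            (pairwise_disjoint_bitRefinement hsd) (hB _) (hE _) fun q =>
            (h _ q.1).imp (hsub q).trans (Or.imp (hsub q).trans (hsub q).trans)
      _ ≤ _ := by
          gcongr
          exact ih (fun _ => hB _) (fun _ => hE _) fun _ => h _

end BitRefinement

section OrdinalEntropy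

open Function

variable {Ω : Set ℝ} {T : ℝ → ℝ} {d n k : ℕ} {ω ω' : ℝ}

def ascentSet (T : ℝ → ℝ) (k l : ℕ) : Set ℝ := {ω | T^[k] ω < T^[k + l] ω}

lemma measurableSet_ascentSet (hT : Measurable T) (k l : ℕ) :
    MeasurableSet (ascentSet T k l) :=
  measurableSet_lt (hT.iterate _) (hT.iterate _)

/-- Outside `V_{d+1}` some `T^[k + l] ω`, `0 < l ≤ d`, separates `T^[k] ω` from
`T^[k + d + 1] ω`, and the windows at `k` and `k + 1` record its position relative to both. -/
lemma iterate_lt_iterate_iff_of_notMem_Vset (hΩ : T^[k] ω ∈ Ω) (hV : T^[k] ω ∉ Vset Ω T (d + 1))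
    (h₁ : SameOrderOn T ω ω' k (k + d)) (h₂ : SameOrderOn T ω ω' (k + 1) (k + 1 + d)) :
    T^[k] ω < T^[k + (d + 1)] ω ↔ T^[k] ω' < T^[k + (d + 1)] ω' := by
  simp only [Vset, mem_sep_iff, not_and, not_or, not_forall, mem_Ioo, mem_Icc, not_not,
    ← Function.iterate_add_apply, exists_prop, add_tsub_cancel_right] at hV
  obtain ⟨hlt, hge⟩ := hV hΩ
  rw [show k + (d + 1) = d + 1 + k by ring]
  rcases lt_or_ge (T^[k] ω) (T^[d + 1 + k] ω) with hlt' | hge'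
  · obtain ⟨l, hl1, hld, hkl, hld1⟩ := hlt hlt'
    exact iff_of_true hlt' (((h₁ k (l + k) le_rfl (by omega) (by omega)).1 hkl).trans
      ((h₂ (l + k) (d + 1 + k) (by omega) (by omega) (by omega)).1 hld1))
  · obtain ⟨l, hl1, hld, hld1, hkl⟩ := hge hge'
    have hld1' := (h₂ (l + k) (d + 1 + k) (by omega) (by omega) (by omega)).not.1
      (not_lt.2 hld1)
    have hkl' := (h₁ k (l + k) le_rfl (by omega) (by omega)).not.1 (not_lt.2 hkl)
    exact iff_of_false hge'.not_gt ((not_lt.1 hld1').trans (not_lt.1 hkl')).not_gt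

lemma wordCell_subset_ascentSet_or_compl_or_preimage_Vset (hk : k + 1 < n)
    (w : Fin n → Equiv.Perm (Fin (d + 1))) :
    wordCell Ω T d n w ⊆ ascentSet T k (d + 1) ∨ wordCell Ω T d n w ⊆ (ascentSet T k (d + 1))ᶜ ∨
      wordCell Ω T d n w ⊆ T^[k] ⁻¹' Vset Ω T (d + 1) := by
  by_cases hV : wordCell Ω T d n w ⊆ T^[k] ⁻¹' Vset Ω T (d + 1)
  · exact Or.inr (Or.inr hV)
  obtain ⟨ω₀, h₀, hω₀V⟩ := not_subset.1 hV
  have hdet : ∀ ω ∈ wordCell Ω T d n w, (ω₀ ∈ ascentSet T k (d + 1) ↔ ω ∈ ascentSet T k (d + 1)) :=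
    fun ω hω => iterate_lt_iterate_iff_of_notMem_Vset
      (iterate_mem_of_mem_wordCell h₀ (by omega)) hω₀V
      (sameOrderOn_of_mem_wordCell h₀ hω (by omega)) (sameOrderOn_of_mem_wordCell h₀ hω hk)
  by_cases hB : ω₀ ∈ ascentSet T k (d + 1)
  · exact Or.inl fun ω hω => (hdet ω hω).1 hB
  · exact Or.inr (Or.inl fun ω hω => (hdet ω hω).not.1 hB)

variable {m : ℕ}

/-- The windows of order `d` at `i` and `i + 1` together with the comparison of `T^[i]` and
`T^[i + d + 1]` determine the window of order `d + 1` at `i`. -/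
lemma exists_bitRefinement_subset_wordCell
    (p : (Fin (m + 1) → Equiv.Perm (Fin (d + 1))) × (Fin m → Bool)) :
    ∃ v, bitRefinement (wordCell Ω T d (m + 1)) (fun k : Fin m => ascentSet T k (d + 1)) p ⊆
      wordCell Ω T (d + 1) m v := by
  rcases (bitRefinement (wordCell Ω T d (m + 1)) _ p).eq_empty_or_nonempty with hp | ⟨ω₀, h₀⟩
  · exact ⟨1, hp ▸ empty_subset _⟩
  obtain ⟨v, hv⟩ := exists_mem_wordCell (d := d + 1)
    fun i (hi : i < m) => iterate_mem_of_mem_wordCell h₀.1 (by omega)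
  refine ⟨v, fun ω hω => mem_wordCell_of_sameOrderOn hv
    (fun i hi => iterate_mem_of_mem_wordCell hω.1 (by omega)) fun i hi => ?_⟩
  refine (sameOrderOn_of_mem_wordCell h₀.1 hω.1 (by omega)).step
    (sameOrderOn_of_mem_wordCell h₀.1 hω.1 (by omega)) ?_
  exact (mem_cond_compl_iff.1 (mem_iInter.1 h₀.2 ⟨i, hi⟩)).trans
    (mem_cond_compl_iff.1 (mem_iInter.1 hω.2 ⟨i, hi⟩)).symm

lemma wordEntropy_le_partitionEntropy_bitRefinement {μ : Measure ℝ} [IsFiniteMeasure μ]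
    (hΩ : MeasurableSet Ω) (hT : Measurable T) (hTΩ : MapsTo T Ω Ω) (hm : m ≠ 0) :
    wordEntropy μ Ω T (d + 1) m ≤ partitionEntropy μ
      (bitRefinement (wordCell Ω T d (m + 1)) fun k : Fin m => ascentSet T k (d + 1)) := by
  refine partitionEntropy_le_of_forall_subset
    (measurableSet_bitRefinement (fun _ => measurableSet_wordCell hΩ hT)
      fun _ => measurableSet_ascentSet hT _ _)
    (pairwise_disjoint_bitRefinement pairwise_disjoint_wordCell) pairwise_disjoint_wordCell
    exists_bitRefinement_subset_wordCell fun v ω hω => ?_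
  have hωΩ : ω ∈ Ω := iterate_mem_of_mem_wordCell hω (Nat.pos_of_ne_zero hm)
  obtain ⟨w, hw⟩ := exists_mem_wordCell (d := d) (n := m + 1) fun i _ => hTΩ.iterate i hωΩ
  rw [iUnion_bitRefinement]
  exact mem_iUnion.2 ⟨w, hw⟩

end OrdinalEntropy

theorem entropy_diff_le_log_two_mul_general
    (Ω : Set ℝ) (hΩ : Ω.OrdConnected)
    (μ : MeasureTheory.Measure ℝ) [MeasureTheory.IsProbabilityMeasure μ]
    (T : ℝ → ℝ) (hTmeas : Measurable T) (hTmaps : Set.MapsTo T Ω Ω)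
    (hTpres : ∀ B : Set ℝ, MeasurableSet B → μ (T ⁻¹' B) = μ B)
    (n : ℕ) (hn : 2 ≤ n) (d : ℕ) :
    wordEntropy μ Ω T (d + 1) (n - 1) - wordEntropy μ Ω T d n ≤
      Real.log 2 * ((n : ℝ) - 1) * (μ (Vset Ω T (d + 1))).toReal := by
  obtain ⟨m, rfl⟩ : ∃ m, n = m + 1 := ⟨n - 1, by omega⟩
  have hΩm := hΩ.measurableSet
  have hμT : MeasurePreserving T μ μ :=
    ⟨hTmeas, Measure.ext fun B hB => by rw [Measure.map_apply hTmeas hB, hTpres B hB]⟩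
  have hV : ∀ k, μ (T^[k] ⁻¹' Vset Ω T (d + 1)) = μ (Vset Ω T (d + 1)) := fun k =>
    (hμT.iterate k).measure_preimage (measurableSet_Vset hΩm hTmeas).nullMeasurableSet
  have hmerge := wordEntropy_le_partitionEntropy_bitRefinement (μ := μ) (d := d) hΩm hTmeas
    hTmaps (by omega : m ≠ 0)
  have hsplit : partitionEntropy μ
      (bitRefinement (wordCell Ω T d (m + 1)) fun k : Fin m => ascentSet T k (d + 1)) ≤
        wordEntropy μ Ω T d (m + 1) +
          Real.log 2 * ∑ k : Fin m, (μ (T^[k] ⁻¹' Vset Ω T (d + 1))).toReal :=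
    partitionEntropy_bitRefinement_le (fun _ => measurableSet_wordCell hΩm hTmeas)
      pairwise_disjoint_wordCell (fun _ => measurableSet_ascentSet hTmeas _ _)
      (fun k => (measurableSet_Vset hΩm hTmeas).preimage (hTmeas.iterate k))
      fun k => wordCell_subset_ascentSet_or_compl_or_preimage_Vset (by omega)
  simp only [hV, Finset.sum_const, Finset.card_univ, Fintype.card_fin, nsmul_eq_mul] at hsplit
  simp only [Nat.add_sub_cancel, Nat.cast_add, Nat.cast_one, add_sub_cancel_right]
  linarith

/-- Theorem 2 of the paper: for all `n ≥ 2` and all `d`,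
`H(P(d+1)_{n-1}) - H(P(d)_n) ≤ (ln 2)·(n-1)·μ(V_{d+1})`. -/
theorem entropy_diff_le_log_two_mul
    (Ω : Set ℝ) (hΩ : Ω.OrdConnected)
    (μ : MeasureTheory.Measure ℝ) [MeasureTheory.IsProbabilityMeasure μ] (hμΩ : μ Ω = 1)
    (hatom : ∀ ω ∈ Ω, μ {ω} = 0)
    (T : ℝ → ℝ) (hTmeas : Measurable T) (hTmaps : Set.MapsTo T Ω Ω)
    (hTpres : ∀ B : Set ℝ, MeasurableSet B → μ (T ⁻¹' B) = μ B)
    (n : ℕ) (hn : 2 ≤ n) (d : ℕ) :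
    wordEntropy μ Ω T (d + 1) (n - 1) - wordEntropy μ Ω T d n ≤
      Real.log 2 * ((n : ℝ) - 1) * (μ (Vset Ω T (d + 1))).toReal :=
  entropy_diff_le_log_two_mul_general Ω hΩ μ T hTmeas hTmaps hTpres n hn d

end
end

section
/- For every d ∈ ℕ, every n ∈ ℕ with n ≥ 2, every element P of the partition P(d)_n, and every l ∈ {0,1,…,n−2}, it holds either P ⊆ T^{−∘l}(V_{d+1}) or P ∩ T^{−∘l}(V_{d+1}) = ∅. -/
open MeasureTheory Set Filter
open scoped ENNReal

noncomputable section

def Rrel {d : ℕ} (x : Fin (d + 1) → ℝ) (p q : Fin (d + 1)) : Prop :=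
  x p < x q ∨ (x p = x q ∧ p < q)

lemma Rrel_trans {d : ℕ} {x : Fin (d + 1) → ℝ} {p q r : Fin (d + 1)}
    (h1 : Rrel x p q) (h2 : Rrel x q r) : Rrel x p r := by
  rcases h1 with h1 | ⟨h1, h1'⟩ <;> rcases h2 with h2 | ⟨h2, h2'⟩
  · exact Or.inl (h1.trans h2)
  · exact Or.inl (h2 ▸ h1)
  · exact Or.inl (h1 ▸ h2)
  · exact Or.inr ⟨h1.trans h2, h1'.trans h2'⟩

lemma Rrel_asymm {d : ℕ} {x : Fin (d + 1) → ℝ} {p q : Fin (d + 1)}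
    (h1 : Rrel x p q) (h2 : Rrel x q p) : False := by
  rcases h1 with h1 | ⟨h1, h1'⟩ <;> rcases h2 with h2 | ⟨h2, h2'⟩
  · exact absurd (h1.trans h2) (lt_irrefl _)
  · exact absurd h1 (by rw [h2]; exact lt_irrefl _)
  · exact absurd h2 (by rw [h1]; exact lt_irrefl _)
  · exact absurd (h1'.trans h2') (lt_irrefl _)

lemma hop_step {d : ℕ} {x : Fin (d + 1) → ℝ} {π : Equiv.Perm (Fin (d + 1))}
    (h : HasOrdinalPattern x π) {a b : Fin (d + 1)} (hab : (b : ℕ) = a + 1) :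
    Rrel x (π b) (π a) := by
  have ha : (a : ℕ) < d := by have := b.isLt; omega
  have h1 : (⟨a, ha⟩ : Fin d).castSucc = a := by ext; simp
  have h2 : (⟨a, ha⟩ : Fin d).succ = b := by ext; simp [hab]
  have := h ⟨a, ha⟩
  rw [h1, h2] at this
  rcases this with h' | ⟨h', h''⟩
  · exact Or.inl h'
  · exact Or.inr ⟨h'.symm, h''⟩

lemma hop_chain {d : ℕ} {x : Fin (d + 1) → ℝ} {π : Equiv.Perm (Fin (d + 1))}
    (h : HasOrdinalPattern x π) :
    ∀ (k : ℕ) (a b : Fin (d + 1)), (b : ℕ) = a + k + 1 → Rrel x (π b) (π a) := by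
  intro k
  induction k with
  | zero => exact fun a b hb => hop_step h (by omega)
  | succ k ih =>
    intro a b hb
    have hc : (a : ℕ) + k + 1 < d + 1 := by have := b.isLt; omega
    exact Rrel_trans (hop_step h (show (b : ℕ) = (⟨a + k + 1, hc⟩ : Fin (d+1)) + 1 by simp; omega))
      (ih a ⟨a + k + 1, hc⟩ rfl)

lemma hop_R_iff {d : ℕ} {x : Fin (d + 1) → ℝ} {π : Equiv.Perm (Fin (d + 1))}
    (h : HasOrdinalPattern x π) (p q : Fin (d + 1)) :
    Rrel x p q ↔ π.symm q < π.symm p := by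
  rcases lt_trichotomy (π.symm p) (π.symm q) with hlt | heq | hgt
  · have hc := hop_chain h ((π.symm q : ℕ) - (π.symm p : ℕ) - 1) (π.symm p) (π.symm q)
      (by have := Fin.lt_iff_val_lt_val.mp hlt; omega)
    simp only [Equiv.apply_symm_apply] at hc
    exact iff_of_false (fun hR => Rrel_asymm hR hc)
      (by intro hq; exact absurd (hlt.trans hq) (lt_irrefl _))
  · have hpq : p = q := by have := congrArg π heq; simpa using this
    subst hpq
    exact iff_of_false (fun hR => Rrel_asymm hR hR) (lt_irrefl _)
  · have hc := hop_chain h ((π.symm p : ℕ) - (π.symm q : ℕ) - 1) (π.symm q) (π.symm p)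
      (by have := Fin.lt_iff_val_lt_val.mp hgt; omega)
    simp only [Equiv.apply_symm_apply] at hc
    exact iff_of_true hc hgt

lemma hop_lt_iff {d : ℕ} {x y : Fin (d + 1) → ℝ} {π : Equiv.Perm (Fin (d + 1))}
    (hx : HasOrdinalPattern x π) (hy : HasOrdinalPattern y π)
    {p q : Fin (d + 1)} (hqp : q < p) : x p < x q ↔ y p < y q := by
  have hR : Rrel x p q ↔ Rrel y p q := (hop_R_iff hx p q).trans (hop_R_iff hy p q).symm
  have hx' : Rrel x p q ↔ x p < x q := by
    constructor
    · rintro (h | ⟨-, h⟩)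
      · exact h
      · exact absurd (hqp.trans h) (lt_irrefl _)
    · exact Or.inl
  have hy' : Rrel y p q ↔ y p < y q := by
    constructor
    · rintro (h | ⟨-, h⟩)
      · exact h
      · exact absurd (hqp.trans h) (lt_irrefl _)
    · exact Or.inl
  rw [← hx', ← hy', hR]

/-- key transfer: if two points lie in the same word cell, then one of their `l`-shifts
is in `Vset Ω T (d+1)` iff the other is. -/
lemma Vset_transfer (Ω : Set ℝ) (T : ℝ → ℝ) (d n : ℕ) (hn : 2 ≤ n)
    (w : Fin n → Equiv.Perm (Fin (d + 1))) (l : ℕ) (hl : l ≤ n - 2)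
    {ω ω' : ℝ} (hω : ω ∈ wordCell Ω T d n w) (hω' : ω' ∈ wordCell Ω T d n w)
    (hV : T^[l] ω ∈ Vset Ω T (d + 1)) : T^[l] ω' ∈ Vset Ω T (d + 1) := by
  have hln : l < n := by omega
  have hl1n : l + 1 < n := by omega
  -- the two relevant ordinal patterns
  have H1 := hω ⟨l, hln⟩
  have H1' := hω' ⟨l, hln⟩
  have H2 := hω ⟨l + 1, hl1n⟩
  have H2' := hω' ⟨l + 1, hl1n⟩
  simp only [ordCell, mem_setOf_eq, mem_sep_iff] at H1 H1' H2 H2'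
  -- bit 1 : comparison of y0 with ym, for 1 ≤ m ≤ d
  have hbit1 : ∀ m : ℕ, 1 ≤ m → m ≤ d →
      (T^[l] ω < T^[m] (T^[l] ω) ↔ T^[l] ω' < T^[m] (T^[l] ω')) := by
    intro m h1 h2
    have hq : d - m < d + 1 := by omega
    have hp : d < d + 1 := by omega
    have hqp : (⟨d - m, hq⟩ : Fin (d + 1)) < ⟨d, hp⟩ := by
      simp [Fin.lt_iff_val_lt_val]; omega
    have := hop_lt_iff H1.2 H1'.2 (p := ⟨d, hp⟩) (q := ⟨d - m, hq⟩) hqp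
    simpa [Nat.sub_self, show d - (d - m) = m by omega] using this
  -- bit 2 : comparison of ym with y(d+1), for 1 ≤ m ≤ d
  have hbit2 : ∀ m : ℕ, 1 ≤ m → m ≤ d →
      (T^[m] (T^[l] ω) < T^[d + 1] (T^[l] ω) ↔ T^[m] (T^[l] ω') < T^[d + 1] (T^[l] ω')) := by
    intro m h1 h2
    have hp : d - m + 1 < d + 1 := by omega
    have hq : (0 : ℕ) < d + 1 := by omega
    have hqp : (⟨0, hq⟩ : Fin (d + 1)) < ⟨d - m + 1, hp⟩ := by
      simp [Fin.lt_iff_val_lt_val]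
    have := hop_lt_iff H2.2 H2'.2 (p := ⟨d - m + 1, hp⟩) (q := ⟨0, hq⟩) hqp
    simp only [show d - (d - m + 1) = m - 1 by omega, Nat.sub_zero] at this
    have e1 : T^[m - 1] (T^[l + 1] ω) = T^[m] (T^[l] ω) := by
      rw [← Function.iterate_add_apply, ← Function.iterate_add_apply]
      congr 1; omega
    have e1' : T^[m - 1] (T^[l + 1] ω') = T^[m] (T^[l] ω') := by
      rw [← Function.iterate_add_apply, ← Function.iterate_add_apply]
      congr 1; omega
    have e2 : T^[d] (T^[l + 1] ω) = T^[d + 1] (T^[l] ω) := by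
      rw [← Function.iterate_add_apply, ← Function.iterate_add_apply]
      congr 1; omega
    have e2' : T^[d] (T^[l + 1] ω') = T^[d + 1] (T^[l] ω') := by
      rw [← Function.iterate_add_apply, ← Function.iterate_add_apply]
      congr 1; omega
    rw [e1, e1', e2, e2'] at this
    exact this
  -- unpack Vset membership for ω
  obtain ⟨hVΩ, hVcond⟩ := hV
  simp only [show d + 1 - 1 = d from rfl] at hVcond
  -- derive the two "no point inside" conditions for ω (they do not depend on the unknown bit)
  have hA : ∀ m : ℕ, 1 ≤ m → m ≤ d →
      ¬(T^[l] ω < T^[m] (T^[l] ω) ∧ T^[m] (T^[l] ω) < T^[d + 1] (T^[l] ω)) := by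
    intro m h1 h2 ⟨ha, hb⟩
    rcases hVcond with ⟨hlt, hno⟩ | ⟨hle, hno⟩
    · exact hno m h1 h2 ⟨ha, hb⟩
    · exact absurd (ha.trans hb) (not_lt.mpr hle)
  have hB : ∀ m : ℕ, 1 ≤ m → m ≤ d →
      ¬(T^[d + 1] (T^[l] ω) ≤ T^[m] (T^[l] ω) ∧ T^[m] (T^[l] ω) ≤ T^[l] ω) := by
    intro m h1 h2 ⟨ha, hb⟩
    rcases hVcond with ⟨hlt, hno⟩ | ⟨hle, hno⟩
    · exact absurd (lt_of_lt_of_le hlt (ha.trans hb)) (lt_irrefl _)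
    · exact hno m h1 h2 ⟨ha, hb⟩
  -- transfer them to ω'
  have hA' : ∀ m : ℕ, 1 ≤ m → m ≤ d →
      ¬(T^[l] ω' < T^[m] (T^[l] ω') ∧ T^[m] (T^[l] ω') < T^[d + 1] (T^[l] ω')) := by
    intro m h1 h2 ⟨ha, hb⟩
    exact hA m h1 h2 ⟨(hbit1 m h1 h2).mpr ha, (hbit2 m h1 h2).mpr hb⟩
  have hB' : ∀ m : ℕ, 1 ≤ m → m ≤ d →
      ¬(T^[d + 1] (T^[l] ω') ≤ T^[m] (T^[l] ω') ∧ T^[m] (T^[l] ω') ≤ T^[l] ω') := by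
    intro m h1 h2 ⟨ha, hb⟩
    exact hB m h1 h2 ⟨not_lt.mp fun hc => (not_lt.mpr ha) ((hbit2 m h1 h2).mp hc),
      not_lt.mp fun hc => (not_lt.mpr hb) ((hbit1 m h1 h2).mp hc)⟩
  -- conclude
  refine ⟨H1'.1, ?_⟩
  simp only [show d + 1 - 1 = d from rfl]
  rcases lt_or_ge (T^[l] ω') (T^[d + 1] (T^[l] ω')) with h | h
  · exact Or.inl ⟨h, fun m h1 h2 hm => hA' m h1 h2 ⟨hm.1, hm.2⟩⟩
  · exact Or.inr ⟨h, fun m h1 h2 hm => hB' m h1 h2 ⟨hm.1, hm.2⟩⟩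


/-- every element of `P(d)_n` is either contained in `T^{-∘l}(V_{d+1})`
or disjoint from it, for each `l ∈ {0,…,n-2}`. -/
theorem wordCell_subset_or_disjoint_preimage_Vset
    (Ω : Set ℝ) (hΩ : Ω.OrdConnected)
    (μ : MeasureTheory.Measure ℝ) [MeasureTheory.IsProbabilityMeasure μ] (hμΩ : μ Ω = 1)
    (hatom : ∀ ω ∈ Ω, μ {ω} = 0)
    (T : ℝ → ℝ) (hTmeas : Measurable T) (hTmaps : Set.MapsTo T Ω Ω)
    (hTpres : ∀ B : Set ℝ, MeasurableSet B → μ (T ⁻¹' B) = μ B)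
    (d n : ℕ) (hn : 2 ≤ n) (w : Fin n → Equiv.Perm (Fin (d + 1)))
    (l : ℕ) (hl : l ≤ n - 2) :
    wordCell Ω T d n w ⊆ T^[l] ⁻¹' Vset Ω T (d + 1) ∨
      wordCell Ω T d n w ∩ T^[l] ⁻¹' Vset Ω T (d + 1) = ∅ := by
  by_cases hex : ∃ ω ∈ wordCell Ω T d n w, T^[l] ω ∈ Vset Ω T (d + 1)
  · obtain ⟨ω₀, hω₀, hV₀⟩ := hex
    exact Or.inl fun ω hω => Vset_transfer Ω T d n hn w l hl hω₀ hω hV₀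
  · refine Or.inr (eq_empty_iff_forall_notMem.mpr ?_)
    rintro x ⟨hx1, hx2⟩
    exact hex ⟨x, hx1, hx2⟩


end
end

section
/- Let T be ergodic and let A ⊆ Ω be an interval. Then for every ε > 0 there exists some d_ε ∈ ℕ such that μ(Ṽ_d(A)) < ε for all d > d_ε (equivalently, lim_{d→∞} μ(Ṽ_d(A)) = 0). -/
open MeasureTheory Set Filter
open scoped ENNReal

noncomputable section

/-!
By ergodicity, almost every point visits any given set of positive measure at some positive time.
Apart from a null set, every `ω ∈ A` has `μ (A ∩ Iio ω) > 0`: the exceptional points form an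
initial segment of `A`, which is a countable union of null sets plus at most its maximum, and
points carry no mass. Second countability lets one replace the thresholds `Iio ω` by countably
many of them, so almost every `ω ∈ A` returns to `A` strictly below `ω`, and likewise strictly
above `ω`. Such an `ω` lies in no `Ṽ_d` with `d` large, so the decreasing sets `Ṽ_d` have a null
intersection and `μ (Ṽ_d) → 0` by continuity from above.
-/

section Order

variable {α : Type*} [LinearOrder α] [TopologicalSpace α] [OrderTopology α]
  [SecondCountableTopology α]

theorem Set.exists_countable_subset_diff_biUnion_Ioi_subsingleton (s : Set α) :
    ∃ t ⊆ s, t.Countable ∧ (s \ ⋃ y ∈ t, Ioi y).Subsingleton := by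
  obtain ⟨t, hts, htc, hU⟩ := TopologicalSpace.isOpen_biUnion_countable s Ioi fun _ _ => isOpen_Ioi
  refine ⟨t, hts, htc, fun x hx y hy => ?_⟩
  rw [hU] at hx hy
  by_contra hne
  rcases lt_or_gt_of_ne hne with h | h
  · exact hy.2 (mem_biUnion hx.1 h)
  · exact hx.2 (mem_biUnion hy.1 h)

theorem Set.exists_countable_subset_diff_biUnion_Iio_subsingleton (s : Set α) :
    ∃ t ⊆ s, t.Countable ∧ (s \ ⋃ y ∈ t, Iio y).Subsingleton :=
  Set.exists_countable_subset_diff_biUnion_Ioi_subsingleton (α := αᵒᵈ) s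

end Order

theorem MeasureTheory.measure_eq_zero_of_countable_of_forall_singleton {α : Type*}
    [MeasurableSpace α] {μ : Measure α} {s : Set α} (hs : s.Countable)
    (h : ∀ x ∈ s, μ {x} = 0) : μ s = 0 := by
  rw [← biUnion_of_singleton s]
  exact (measure_biUnion_null_iff hs).2 h

theorem measure_setOf_measure_inter_Iio_eq_zero {α : Type*} [LinearOrder α] [TopologicalSpace α]
    [OrderTopology α] [SecondCountableTopology α] [MeasurableSpace α] {μ : Measure α}
    {A : Set α} (hatom : ∀ x ∈ A, μ {x} = 0) :
    μ {x ∈ A | μ (A ∩ Iio x) = 0} = 0 := by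
  set S := {x ∈ A | μ (A ∩ Iio x) = 0}
  obtain ⟨t, htS, htc, hsub⟩ := S.exists_countable_subset_diff_biUnion_Iio_subsingleton
  have hcover : S ⊆ (⋃ y ∈ t, A ∩ Iio y) ∪ (S \ ⋃ y ∈ t, Iio y) := by
    intro x hx
    by_cases h : x ∈ ⋃ y ∈ t, Iio y
    · obtain ⟨y, hyt, hxy⟩ := mem_iUnion₂.1 h
      exact Or.inl (mem_biUnion hyt ⟨hx.1, hxy⟩)
    · exact Or.inr ⟨hx, h⟩
  refine measure_mono_null hcover (measure_union_null ?_ ?_)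
  · exact (measure_biUnion_null_iff htc).2 fun y hy => (htS hy).2
  · exact measure_eq_zero_of_countable_of_forall_singleton hsub.countable
      fun x hx => hatom x hx.1.1

namespace Ergodic

variable {α : Type*} [MeasurableSpace α] {μ : Measure α} [IsFiniteMeasure μ] {f : α → α}

theorem ae_exists_iterate_mem (hf : Ergodic f μ) {s : Set α} (hs : MeasurableSet s)
    (hμs : μ s ≠ 0) : ∀ᵐ x ∂μ, ∃ n, 0 < n ∧ f^[n] x ∈ s := by
  set H := ⋃ n, f^[n + 1] ⁻¹' s
  have hH : MeasurableSet H := .iUnion fun n => hf.measurable.iterate (n + 1) hs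
  have hpre : f ⁻¹' H ⊆ H := by
    simp only [H, preimage_iUnion, ← preimage_comp, ← Function.iterate_succ]
    exact iUnion_subset fun n => subset_iUnion (fun n => f^[n + 1] ⁻¹' s) (n + 1)
  have hHpos : μ H ≠ 0 := by
    refine fun h => hμs ?_
    rw [← (hf.iterate 1).measure_preimage hs.nullMeasurableSet]
    exact measure_mono_null (subset_iUnion (fun n => f^[n + 1] ⁻¹' s) 0) h
  rcases hf.ae_empty_or_univ_of_preimage_ae_le hH.nullMeasurableSet hpre.eventuallyLE with h | h
  · exact absurd (ae_eq_empty.1 h) hHpos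
  · filter_upwards [mem_ae_iff.2 (ae_eq_univ.1 h)] with x hx
    obtain ⟨n, hn⟩ := mem_iUnion.1 hx
    exact ⟨n + 1, n.succ_pos, hn⟩

section LinearOrder

variable [LinearOrder α] [TopologicalSpace α] [OrderTopology α] [SecondCountableTopology α]
  [OpensMeasurableSpace α] {A : Set α}

theorem ae_exists_iterate_mem_lt (hf : Ergodic f μ) (hA : MeasurableSet A)
    (hatom : ∀ x ∈ A, μ {x} = 0) :
    ∀ᵐ x ∂μ, x ∈ A → ∃ n, 0 < n ∧ f^[n] x ∈ A ∧ f^[n] x < x := by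
  set S := {x ∈ A | μ (A ∩ Iio x) ≠ 0}
  -- countably many thresholds `y ∈ t` suffice: every point of `S` but its minimum lies above one
  obtain ⟨t, htS, htc, hsub⟩ := S.exists_countable_subset_diff_biUnion_Ioi_subsingleton
  have hhit : ∀ᵐ x ∂μ, ∀ y ∈ t, ∃ n, 0 < n ∧ f^[n] x ∈ A ∩ Iio y :=
    (ae_ball_iff htc).2 fun y hy =>
      hf.ae_exists_iterate_mem (hA.inter measurableSet_Iio) (htS hy).2
  have hmin : ∀ᵐ x ∂μ, x ∉ S \ ⋃ y ∈ t, Ioi y :=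
    measure_eq_zero_iff_ae_notMem.1 <| measure_eq_zero_of_countable_of_forall_singleton
      hsub.countable fun x hx => hatom x hx.1.1
  have hnull : ∀ᵐ x ∂μ, x ∉ {x ∈ A | μ (A ∩ Iio x) = 0} :=
    measure_eq_zero_iff_ae_notMem.1 (measure_setOf_measure_inter_Iio_eq_zero hatom)
  filter_upwards [hhit, hmin, hnull] with x hxhit hxmin hxnull hxA
  have hxS : x ∈ S := ⟨hxA, fun h => hxnull ⟨hxA, h⟩⟩
  obtain ⟨y, hyt, hyx⟩ := mem_iUnion₂.1 (not_not.1 fun h => hxmin ⟨hxS, h⟩)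
  obtain ⟨n, hn, hnA, hny⟩ := hxhit y hyt
  exact ⟨n, hn, hnA, hny.trans hyx⟩

theorem ae_exists_iterate_mem_gt (hf : Ergodic f μ) (hA : MeasurableSet A)
    (hatom : ∀ x ∈ A, μ {x} = 0) :
    ∀ᵐ x ∂μ, x ∈ A → ∃ n, 0 < n ∧ f^[n] x ∈ A ∧ x < f^[n] x :=
  have : IsFiniteMeasure (α := αᵒᵈ) μ := ‹IsFiniteMeasure μ›
  ae_exists_iterate_mem_lt (α := αᵒᵈ) hf hA hatom

end LinearOrder

end Ergodic

theorem IsErgodicMap.ergodic {μ : Measure ℝ} [IsProbabilityMeasure μ] {T : ℝ → ℝ}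
    (herg : IsErgodicMap μ T) (hTmeas : Measurable T)
    (hTpres : ∀ B : Set ℝ, MeasurableSet B → μ (T ⁻¹' B) = μ B) : Ergodic T μ where
  measurable := hTmeas
  map_eq := Measure.ext fun s hs => by rw [Measure.map_apply hTmeas hs, hTpres s hs]
  aeconst_set s hs hinv := by
    rw [eventuallyConst_set', ae_eq_empty, ae_eq_univ, prob_compl_eq_zero_iff hs]
    exact herg s hs hinv

theorem antitone_Vtilde (A : Set ℝ) (T : ℝ → ℝ) : Antitone (Vtilde A T) := by
  rintro d d' hd ω ⟨hωA, h | h⟩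
  · exact ⟨hωA, .inl fun l hl hld => h l hl (hld.trans (by omega))⟩
  · exact ⟨hωA, .inr fun l hl hld => h l hl (hld.trans (by omega))⟩

theorem measurableSet_Vtilde {A : Set ℝ} (hA : MeasurableSet A) {T : ℝ → ℝ}
    (hT : Measurable T) (d : ℕ) : MeasurableSet (Vtilde A T d) := by
  simp only [Vtilde, mem_sep_iff]
  exact hA.inter (Measurable.setOf (by fun_prop))

theorem notMem_Vtilde_of_iterate_lt_of_lt_iterate {A : Set ℝ} {T : ℝ → ℝ} {ω : ℝ} {m n d : ℕ}
    (hm : 0 < m) (hmA : T^[m] ω ∈ A) (hmω : T^[m] ω < ω)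
    (hn : 0 < n) (hnA : T^[n] ω ∈ A) (hnω : ω < T^[n] ω) (hd : max m n < d) :
    ω ∉ Vtilde A T d := by
  rintro ⟨-, h | h⟩
  · exact h m hm (by omega) ⟨hmA, hmω⟩
  · exact h n hn (by omega) ⟨hnA, hnω⟩

theorem measure_iInter_Vtilde_eq_zero {μ : Measure ℝ} [IsFiniteMeasure μ] {T : ℝ → ℝ}
    (hT : Ergodic T μ) {A : Set ℝ} (hA : MeasurableSet A) (hatom : ∀ x ∈ A, μ {x} = 0) :
    μ (⋂ d, Vtilde A T d) = 0 := by
  rw [measure_eq_zero_iff_ae_notMem]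
  filter_upwards [hT.ae_exists_iterate_mem_lt hA hatom, hT.ae_exists_iterate_mem_gt hA hatom]
    with ω hlt hgt hω
  have hωA : ω ∈ A := (mem_iInter.1 hω 0).1
  obtain ⟨m, hm, hmA, hmω⟩ := hlt hωA
  obtain ⟨n, hn, hnA, hnω⟩ := hgt hωA
  exact notMem_Vtilde_of_iterate_lt_of_lt_iterate hm hmA hmω hn hnA hnω (Nat.lt_succ_self _)
    (mem_iInter.1 hω (max m n + 1))

theorem tendsto_measure_Vtilde_atTop {μ : Measure ℝ} [IsFiniteMeasure μ] {T : ℝ → ℝ}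
    (hT : Ergodic T μ) {A : Set ℝ} (hA : MeasurableSet A) (hatom : ∀ x ∈ A, μ {x} = 0) :
    Tendsto (fun d => μ (Vtilde A T d)) atTop (nhds 0) := by
  rw [← measure_iInter_Vtilde_eq_zero hT hA hatom]
  exact tendsto_measure_iInter_atTop
    (fun d => (measurableSet_Vtilde hA hT.measurable d).nullMeasurableSet)
    (antitone_Vtilde A T) ⟨0, measure_ne_top μ _⟩

theorem measure_Vtilde_small_of_ergodic_general
    (Ω : Set ℝ)
    (μ : MeasureTheory.Measure ℝ) [MeasureTheory.IsProbabilityMeasure μ]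
    (hatom : ∀ ω ∈ Ω, μ {ω} = 0)
    (T : ℝ → ℝ) (hTmeas : Measurable T)
    (hTpres : ∀ B : Set ℝ, MeasurableSet B → μ (T ⁻¹' B) = μ B)
    (herg : IsErgodicMap μ T)
    (A : Set ℝ) (hA : A ⊆ Ω) (hAconn : A.OrdConnected) :
    ∀ ε : ℝ, 0 < ε → ∃ dε : ℕ, ∀ d : ℕ, dε < d → (μ (Vtilde A T d)).toReal < ε := by
  intro ε hε
  have htend := tendsto_measure_Vtilde_atTop (herg.ergodic hTmeas hTpres)
    hAconn.measurableSet fun x hx => hatom x (hA hx)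
  obtain ⟨N, hN⟩ := eventually_atTop.1 (htend.eventually_lt_const (ENNReal.ofReal_pos.2 hε))
  exact ⟨N, fun d hd => ENNReal.toReal_lt_of_lt_ofReal (hN d hd.le)⟩

/-- Lemma 1 of the paper: if `T` is ergodic and `A ⊆ Ω` is an interval,
then for every `ε > 0` there is `dε` with `μ(Ṽ_d(A)) < ε` for all `d > dε`. -/
theorem measure_Vtilde_small_of_ergodic
    (Ω : Set ℝ) (hΩ : Ω.OrdConnected)
    (μ : MeasureTheory.Measure ℝ) [MeasureTheory.IsProbabilityMeasure μ] (hμΩ : μ Ω = 1)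
    (hatom : ∀ ω ∈ Ω, μ {ω} = 0)
    (T : ℝ → ℝ) (hTmeas : Measurable T) (hTmaps : Set.MapsTo T Ω Ω)
    (hTpres : ∀ B : Set ℝ, MeasurableSet B → μ (T ⁻¹' B) = μ B)
    (herg : IsErgodicMap μ T)
    (A : Set ℝ) (hA : A ⊆ Ω) (hAconn : A.OrdConnected) :
    ∀ ε : ℝ, 0 < ε → ∃ dε : ℕ, ∀ d : ℕ, dε < d → (μ (Vtilde A T d)).toReal < ε :=
  measure_Vtilde_small_of_ergodic_general Ω μ hatom T hTmeas hTpres herg A hA hAconn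

end
end

section
/- Let A ⊆ Ω be an interval and d ∈ ℕ with d ≥ 2. Then V_d ∩ A ⊆ (A ∩ T^{−∘d}(A)) ∪ Ṽ_d(A); that is, for every ω ∈ V_d ∩ A, either T^{∘d}(ω) ∈ A or ω ∈ Ṽ_d(A). -/
open MeasureTheory Set Filter
open scoped ENNReal

noncomputable section

/-- for an interval `A ⊆ Ω` and `d ≥ 2`,
`V_d ∩ A ⊆ (A ∩ T^{-∘d}(A)) ∪ Ṽ_d(A)`. -/
theorem Vset_inter_subset
    (Ω : Set ℝ) (hΩ : Ω.OrdConnected)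
    (μ : MeasureTheory.Measure ℝ) [MeasureTheory.IsProbabilityMeasure μ] (hμΩ : μ Ω = 1)
    (hatom : ∀ ω ∈ Ω, μ {ω} = 0)
    (T : ℝ → ℝ) (hTmeas : Measurable T) (hTmaps : Set.MapsTo T Ω Ω)
    (hTpres : ∀ B : Set ℝ, MeasurableSet B → μ (T ⁻¹' B) = μ B)
    (A : Set ℝ) (hA : A ⊆ Ω) (hAconn : A.OrdConnected) (d : ℕ) (hd : 2 ≤ d) :
    Vset Ω T d ∩ A ⊆ (A ∩ T^[d] ⁻¹' A) ∪ Vtilde A T d := by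
  rintro ω ⟨⟨hωΩ, hcase⟩, hωA⟩
  by_cases hTd : T^[d] ω ∈ A
  · exact Or.inl ⟨hωA, hTd⟩
  · right
    refine ⟨hωA, ?_⟩
    rcases hcase with ⟨hlt, hno⟩ | ⟨hle, hno⟩
    · right
      intro l h1 h2 ⟨hlA, hωlt⟩
      have := hno l h1 h2
      have hge : T^[d] ω ≤ T^[l] ω := by
        by_contra hlt'
        exact this ⟨hωlt, not_le.mp hlt'⟩
      exact hTd (hAconn.out hωA hlA ⟨le_of_lt hlt, hge⟩)
    · left
      intro l h1 h2 ⟨hlA, hltω⟩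
      have := hno l h1 h2
      have hlt' : T^[l] ω < T^[d] ω := by
        by_contra h
        exact this ⟨not_lt.mp h, le_of_lt hltω⟩
      exact hTd (hAconn.out hlA hωA ⟨le_of_lt hlt', hle⟩)

end
end
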